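/- Bind respects equivalence up to Tau: for any event signature E, types A and R, if t ≡ u in itree E A and k, k' : A → itree E R satisfy k a ≡ k' a for every a : A, then (a <- t ;; k a) ≡ (a <- u ;; k' a). In particular, itree E is a monad modulo equivalence up to Tau. -/

import Mathlib

/-! ## Interaction trees -/

/-- Node shapes of an interaction tree over event signature `E` with result type `R`. -/
inductive ITreeShape (E : Type → Type) (R : Type) : Type 1
  | ret (r : R) : ITreeShape E R
  | tau : ITreeShape E R
  | vis (X : Type) (e : E X) : ITreeShape E R

/-- The polynomial functor whose final coalgebra is the type of interaction trees. -/
def ITreeF (E : Type → Type) (R : Type) : PFunctor.{1, 1} :=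
  ⟨ITreeShape E R, fun s =>
    match s with
    | .ret _ => PEmpty
    | .tau => PUnit
    | .vis X _ => ULift X⟩

/-- Interaction trees: the coinductive type with constructors `Ret`, `Tau` and `Vis`,
realized as the M-type (final coalgebra) of `ITreeF E R`. -/
def ITree (E : Type → Type) (R : Type) : Type 1 :=
  (ITreeF E R).M

namespace ITree

variable {E : Type → Type} {A B R S : Type}

/-- `Ret r`: the computation that halts returning `r`. -/
def ret (r : R) : ITree E R :=
  PFunctor.M.mk ⟨ITreeShape.ret r, fun x => PEmpty.elim x⟩

/-- `Tau t`: a silent internal step followed by `t`. -/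
def tau (t : ITree E R) : ITree E R :=
  PFunctor.M.mk ⟨ITreeShape.tau, fun _ => t⟩

/-- `Vis e k`: a visible event `e` awaiting an answer `x : X`, continuing as `k x`. -/
def vis {X : Type} (e : E X) (k : X → ITree E R) : ITree E R :=
  PFunctor.M.mk ⟨ITreeShape.vis X e, fun x => k x.down⟩

/-- Monadic bind: corecursively grafts `k r` at each leaf `Ret r`. -/
def bind (t : ITree E A) (k : A → ITree E R) : ITree E R :=
  PFunctor.M.corec
    (fun s =>
      match s with
      | Sum.inl t' =>
        match PFunctor.M.dest t' with
        | ⟨ITreeShape.ret a, _⟩ =>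
          match PFunctor.M.dest (k a) with
          | ⟨sh, ch⟩ => ⟨sh, fun b => Sum.inr (ch b)⟩
        | ⟨ITreeShape.tau, ch⟩ => ⟨ITreeShape.tau, fun b => Sum.inl (ch b)⟩
        | ⟨ITreeShape.vis X e, ch⟩ => ⟨ITreeShape.vis X e, fun b => Sum.inl (ch b)⟩
      | Sum.inr u =>
        match PFunctor.M.dest u with
        | ⟨sh, ch⟩ => ⟨sh, fun b => Sum.inr (ch b)⟩)
    (Sum.inl t : ITree E A ⊕ ITree E R)

instance : Monad (ITree E) where
  pure := ret
  bind := bind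

/-- Perform a single event and return its answer. -/
def trigger {X : Type} (e : E X) : ITree E X :=
  vis e ret

/-- The silently diverging tree: `spin = Tau spin`. -/
def spin : ITree E R :=
  PFunctor.M.corec (fun _ : PUnit.{2} => ⟨ITreeShape.tau, fun _ => PUnit.unit⟩) PUnit.unit

/-- Iterate a body `step` forever (a `CoFixpoint` loop threading a state `s : S`). -/
def loop (step : S → ITree E S) (s₀ : S) : ITree E Unit :=
  PFunctor.M.corec
    (fun t : ITree E S =>
      match PFunctor.M.dest t with
      | ⟨ITreeShape.ret s, _⟩ => ⟨ITreeShape.tau, fun _ => step s⟩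
      | ⟨ITreeShape.tau, ch⟩ => ⟨ITreeShape.tau, fun b => ch b⟩
      | ⟨ITreeShape.vis X e, ch⟩ => ⟨ITreeShape.vis X e, fun b => ch b⟩)
    (step s₀)

/-! ## Equivalence up to Tau (weak bisimulation) -/

/-- `Untaus t u`: `u` is obtained from `t` by removing finitely many leading `Tau`
nodes, and `u` does not itself start with a `Tau`. -/
inductive Untaus : ITree E R → ITree E R → Prop
  | base {t : ITree E R} (h : ∀ t', t ≠ tau t') : Untaus t t
  | step {t u : ITree E R} (h : Untaus t u) : Untaus (tau t) u

/-- `t` converges to a non-`Tau` node after finitely many leading `Tau`s. -/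
def FiniteTaus (t : ITree E R) : Prop := ∃ t', Untaus t t'

/-- Two trees with no leading `Tau` match up to `Rel`: both are the same `Ret`,
or both are `Vis` of the same event with continuations pointwise related by `Rel`. -/
def EqHead (Rel : ITree E R → ITree E R → Prop) (t u : ITree E R) : Prop :=
  (∃ r : R, t = ret r ∧ u = ret r) ∨
  (∃ (X : Type) (e : E X) (k k' : X → ITree E R),
      t = vis e k ∧ u = vis e k' ∧ ∀ x : X, Rel (k x) (k' x))

/-- `Rel` is a weak bisimulation. -/
def IsEuttRel (Rel : ITree E R → ITree E R → Prop) : Prop :=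
  ∀ t u, Rel t u →
    (FiniteTaus t ↔ FiniteTaus u) ∧
    (∀ t' u', Untaus t t' → Untaus u u' → EqHead Rel t' u')

/-- Equivalence up to `Tau`: the greatest weak bisimulation. -/
def Eutt (t u : ITree E R) : Prop :=
  ∃ Rel, IsEuttRel Rel ∧ Rel t u

/-! ## Traces -/

/-- An event together with the environment's answer. -/
structure EventE (E : Type → Type) : Type 1 where
  X : Type
  e : E X
  ans : X

/-- `IsTrace t tr r?` holds when `tr` lists, in order, the `Vis` events (with answers)
along a finite `Tau`-skipping path of `t`, with `r? = some r` if the path ends at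
`Ret r` and `none` otherwise. -/
inductive IsTrace : ITree E R → List (EventE E) → Option R → Prop
  | nil (t : ITree E R) : IsTrace t [] none
  | retEnd (r : R) : IsTrace (ITree.ret r) [] (some r)
  | tauStep {t : ITree E R} {tr r?} : IsTrace t tr r? → IsTrace (ITree.tau t) tr r?
  | visStep {X : Type} (e : E X) (x : X) {k : X → ITree E R} {tr r?} :
      IsTrace (k x) tr r? → IsTrace (ITree.vis e k) (⟨X, e, x⟩ :: tr) r?

/-- Trace refinement: every trace of `t` (with its optional result) is a trace of `u`. -/
def Refines (t u : ITree E R) : Prop :=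
  ∀ tr r?, IsTrace t tr r? → IsTrace u tr r?

end ITree

/-! The relation `{(bind t k, bind u k') | t ≈ u}` is a weak bisimulation up to `≈`. Once its
leading taus are stripped, `bind t k` either sits at the head of `k a`, where `t` itself
reaches `Ret a`, or at `Vis e (fun x => bind (h x) k)`, where `t` reaches `Vis e h`. Since
`t ≈ u` forces `u` to reach a matching head, the first case is closed by `k a ≈ k' a` and the
second case stays inside the relation. -/

namespace ITree

variable {E : Type → Type} {A R : Type}

theorem ret_ne_tau (r : R) (t : ITree E R) : ret (E := E) r ≠ tau t := fun h => by
  cases PFunctor.M.mk_inj h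

theorem vis_ne_tau {X : Type} (e : E X) (h : X → ITree E R) (t : ITree E R) :
    vis e h ≠ tau t := fun h => by
  cases PFunctor.M.mk_inj h

theorem ret_ne_vis (r : R) {X : Type} (e : E X) (h : X → ITree E R) :
    ret (E := E) r ≠ vis e h := fun h => by
  cases PFunctor.M.mk_inj h

theorem ret_injective : Function.Injective (ret (E := E) (R := R)) := fun r r' h => by
  cases PFunctor.M.mk_inj h
  rfl

theorem tau_injective : Function.Injective (tau (E := E) (R := R)) := fun _ _ h =>
  congrFun (eq_of_heq (Sigma.mk.inj (PFunctor.M.mk_inj h)).2) PUnit.unit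

theorem eq_ret_or_eq_tau_or_eq_vis (t : ITree E R) :
    (∃ r, t = ret r) ∨ (∃ t', t = tau t') ∨
      ∃ (X : Type) (e : E X) (h : X → ITree E R), t = vis e h := by
  rw [← PFunctor.M.mk_dest t]
  rcases PFunctor.M.dest t with ⟨_ | _ | ⟨X, e⟩, f⟩
  · exact Or.inl ⟨_, congrArg _ (Sigma.ext rfl (heq_of_eq (funext nofun)))⟩
  · exact Or.inr (Or.inl ⟨f PUnit.unit, rfl⟩)
  · exact Or.inr (Or.inr ⟨X, e, fun x => f ⟨x⟩, rfl⟩)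

def bindStep (k : A → ITree E R) :
    ITree E A ⊕ ITree E R → (ITreeF E R).Obj (ITree E A ⊕ ITree E R)
  | Sum.inl t' =>
    match PFunctor.M.dest t' with
    | ⟨ITreeShape.ret a, _⟩ =>
      match PFunctor.M.dest (k a) with
      | ⟨sh, ch⟩ => ⟨sh, fun b => Sum.inr (ch b)⟩
    | ⟨ITreeShape.tau, ch⟩ => ⟨ITreeShape.tau, fun b => Sum.inl (ch b)⟩
    | ⟨ITreeShape.vis X e, ch⟩ => ⟨ITreeShape.vis X e, fun b => Sum.inl (ch b)⟩
  | Sum.inr u =>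
    match PFunctor.M.dest u with
    | ⟨sh, ch⟩ => ⟨sh, fun b => Sum.inr (ch b)⟩

theorem bind_eq_corec (t : ITree E A) (k : A → ITree E R) :
    bind t k = PFunctor.M.corec (bindStep k) (Sum.inl t) := rfl

theorem corec_bindStep_inr (k : A → ITree E R) (u : ITree E R) :
    PFunctor.M.corec (bindStep k) (Sum.inr u) = u := by
  have h1 : (fun u => PFunctor.M.corec (bindStep k) (Sum.inr u)) =
      PFunctor.M.corec PFunctor.M.dest :=
    PFunctor.M.corec_unique _ _ fun u => by
      rw [PFunctor.M.dest_corec]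
      simp only [bindStep]
      rcases u.dest with ⟨sh, ch⟩
      rfl
  have h2 : id = PFunctor.M.corec (PFunctor.M.dest (F := ITreeF E R)) :=
    PFunctor.M.corec_unique _ _ fun u => by simp
  exact congrFun (h1.trans h2.symm) u

theorem bind_tau (t : ITree E A) (k : A → ITree E R) : bind (tau t) k = tau (bind t k) :=
  PFunctor.M.corec_def _ _

theorem bind_vis {X : Type} (e : E X) (h : X → ITree E A) (k : A → ITree E R) :
    bind (vis e h) k = vis e fun x => bind (h x) k :=
  PFunctor.M.corec_def _ _

theorem bind_ret (a : A) (k : A → ITree E R) : bind (ret a) k = k a := by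
  rw [bind_eq_corec, PFunctor.M.corec_def, ← corec_bindStep_inr k (k a), PFunctor.M.corec_def]
  rfl

theorem untaus_ret (r : R) : Untaus (ret (E := E) r) (ret r) :=
  Untaus.base (ret_ne_tau r)

theorem untaus_vis {X : Type} (e : E X) (h : X → ITree E R) : Untaus (vis e h) (vis e h) :=
  Untaus.base (vis_ne_tau e h)

theorem Untaus.bind_of_ret {t : ITree E A} {a : A} (h : Untaus t (ret a)) {k : A → ITree E R}
    {w : ITree E R} (hw : Untaus (k a) w) : Untaus (bind t k) w := by
  generalize hra : ret a = ra at h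
  induction h with
  | base => subst hra; rwa [bind_ret]
  | step _ ih => rw [bind_tau]; exact (ih hra).step

theorem Untaus.bind_of_vis {t : ITree E A} {X : Type} {e : E X} {h : X → ITree E A}
    (ht : Untaus t (vis e h)) (k : A → ITree E R) :
    Untaus (bind t k) (vis e fun x => bind (h x) k) := by
  generalize hv : vis e h = v at ht
  induction ht with
  | base => subst hv; rw [bind_vis]; exact untaus_vis _ _
  | step _ ih => rw [bind_tau]; exact (ih hv).step

theorem untaus_bind_iff {t : ITree E A} {k : A → ITree E R} {w : ITree E R} :
    Untaus (bind t k) w ↔ (∃ a, Untaus t (ret a) ∧ Untaus (k a) w) ∨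
      ∃ (X : Type) (e : E X) (h : X → ITree E A),
        Untaus t (vis e h) ∧ w = vis e fun x => bind (h x) k := by
  refine ⟨fun hw => ?_, ?_⟩
  · generalize hx : bind t k = x at hw
    induction hw generalizing t with
    | base hne =>
      rcases eq_ret_or_eq_tau_or_eq_vis t with ⟨a, rfl⟩ | ⟨s, rfl⟩ | ⟨X, e, h, rfl⟩
      · rw [bind_ret] at hx
        subst hx
        exact .inl ⟨a, untaus_ret a, .base hne⟩
      · rw [bind_tau] at hx
        exact absurd hx.symm (hne _)
      · exact .inr ⟨X, e, h, untaus_vis e h, by rw [← hx, bind_vis]⟩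
    | step hw ih =>
      rcases eq_ret_or_eq_tau_or_eq_vis t with ⟨a, rfl⟩ | ⟨s, rfl⟩ | ⟨X, e, h, rfl⟩
      · rw [bind_ret] at hx
        exact .inl ⟨a, untaus_ret a, hx ▸ hw.step⟩
      · rw [bind_tau] at hx
        exact (ih (tau_injective hx)).imp (fun ⟨a, hs, hw⟩ => ⟨a, hs.step, hw⟩)
          fun ⟨X, e, h, hs, hw⟩ => ⟨X, e, h, hs.step, hw⟩
      · rw [bind_vis] at hx
        exact absurd hx (vis_ne_tau _ _ _)
  · rintro (⟨a, ht, hw⟩ | ⟨X, e, h, ht, rfl⟩)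
    exacts [ht.bind_of_ret hw, ht.bind_of_vis k]

section EqHead

variable {P Q : ITree E R → ITree E R → Prop} {t u : ITree E R}

theorem EqHead.mono (hPQ : ∀ x y, P x y → Q x y) (h : EqHead P t u) : EqHead Q t u :=
  h.imp id fun ⟨X, e, k, k', ht, hu, hk⟩ => ⟨X, e, k, k', ht, hu, fun x => hPQ _ _ (hk x)⟩

theorem EqHead.symm (h : EqHead P t u) : EqHead (fun x y => P y x) u t :=
  h.imp (fun ⟨r, ht, hu⟩ => ⟨r, hu, ht⟩)
    fun ⟨X, e, k, k', ht, hu, hk⟩ => ⟨X, e, k', k, hu, ht, hk⟩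

theorem EqHead.eq_ret_of_left {r : R} (h : EqHead P (ret r) u) : u = ret r := by
  rcases h with ⟨r', hr, rfl⟩ | ⟨X, e, k, k', hr, -, -⟩
  · rw [ret_injective hr]
  · exact absurd hr (ret_ne_vis _ _ _)

theorem EqHead.eq_ret_of_right {r : R} (h : EqHead P t (ret r)) : t = ret r :=
  h.symm.eq_ret_of_left

end EqHead

section Eutt

variable {t u : ITree E R}

theorem isEuttRel_eutt : IsEuttRel (Eutt (E := E) (R := R)) := fun t u ⟨Rel, hRel, htu⟩ =>
  ⟨(hRel t u htu).1, fun t' u' ht hu =>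
    ((hRel t u htu).2 t' u' ht hu).mono fun _ _ h => ⟨Rel, hRel, h⟩⟩

theorem Eutt.finiteTaus_iff (h : Eutt t u) : FiniteTaus t ↔ FiniteTaus u :=
  (isEuttRel_eutt t u h).1

theorem Eutt.eqHead (h : Eutt t u) {t' u' : ITree E R} (ht : Untaus t t') (hu : Untaus u u') :
    EqHead Eutt t' u' :=
  (isEuttRel_eutt t u h).2 t' u' ht hu

theorem Eutt.symm (h : Eutt t u) : Eutt u t := by
  obtain ⟨Rel, hRel, htu⟩ := h
  refine ⟨fun x y => Rel y x, fun x y hxy => ⟨(hRel y x hxy).1.symm, fun x' y' hx hy => ?_⟩,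
    htu⟩
  exact ((hRel y x hxy).2 y' x' hy hx).symm

theorem Eutt.coinduct_upTo (Rel : ITree E R → ITree E R → Prop)
    (hRel : ∀ t u, Rel t u → (FiniteTaus t ↔ FiniteTaus u) ∧
      ∀ t' u', Untaus t t' → Untaus u u' → EqHead (fun x y => Rel x y ∨ Eutt x y) t' u')
    (htu : Rel t u) : Eutt t u := by
  refine ⟨fun x y => Rel x y ∨ Eutt x y, ?_, .inl htu⟩
  rintro x y (hxy | hxy)
  · exact hRel x y hxy
  · exact ⟨hxy.finiteTaus_iff, fun x' y' hx hy => (hxy.eqHead hx hy).mono fun _ _ => .inr⟩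

theorem Eutt.exists_untaus_eqHead (h : Eutt t u) {t' : ITree E R} (ht : Untaus t t') :
    ∃ u', Untaus u u' ∧ EqHead Eutt t' u' :=
  let ⟨u', hu⟩ := h.finiteTaus_iff.mp ⟨t', ht⟩
  ⟨u', hu, h.eqHead ht hu⟩

theorem Eutt.untaus_ret (h : Eutt t u) {r : R} (ht : Untaus t (ret r)) : Untaus u (ret r) := by
  obtain ⟨u', hu, hhead⟩ := h.exists_untaus_eqHead ht
  rwa [hhead.eq_ret_of_left] at hu

theorem Eutt.exists_untaus_vis (h : Eutt t u) {X : Type} {e : E X} {g : X → ITree E R}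
    (ht : Untaus t (vis e g)) :
    ∃ (Y : Type) (f : E Y) (g' : Y → ITree E R), Untaus u (vis f g') := by
  obtain ⟨u', hu, ⟨r, hr, -⟩ | ⟨Y, f, -, g', -, rfl, -⟩⟩ := h.exists_untaus_eqHead ht
  · exact absurd hr.symm (ret_ne_vis _ _ _)
  · exact ⟨Y, f, g', hu⟩

end Eutt

theorem finiteTaus_bind_iff {t : ITree E A} {k : A → ITree E R} :
    FiniteTaus (bind t k) ↔ (∃ a, Untaus t (ret a) ∧ FiniteTaus (k a)) ∨
      ∃ (X : Type) (e : E X) (h : X → ITree E A), Untaus t (vis e h) := by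
  simp only [FiniteTaus, untaus_bind_iff]
  constructor
  · rintro ⟨w, ⟨a, ht, hw⟩ | ⟨X, e, h, ht, -⟩⟩
    exacts [.inl ⟨a, ht, w, hw⟩, .inr ⟨X, e, h, ht⟩]
  · rintro (⟨a, ht, w, hw⟩ | ⟨X, e, h, ht⟩)
    exacts [⟨w, .inl ⟨a, ht, hw⟩⟩, ⟨_, .inr ⟨X, e, h, ht, rfl⟩⟩]

variable {k k' : A → ITree E R} {t u : ITree E A}

theorem Eutt.finiteTaus_bind (hk : ∀ a, Eutt (k a) (k' a)) (h : Eutt t u)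
    (ht : FiniteTaus (bind t k)) : FiniteTaus (bind u k') := by
  rw [finiteTaus_bind_iff] at ht ⊢
  rcases ht with ⟨a, hta, hka⟩ | ⟨X, e, g, htg⟩
  · exact .inl ⟨a, h.untaus_ret hta, (hk a).finiteTaus_iff.mp hka⟩
  · exact .inr (h.exists_untaus_vis htg)

def BindEutt (k k' : A → ITree E R) (x y : ITree E R) : Prop :=
  ∃ t u, Eutt t u ∧ x = bind t k ∧ y = bind u k'

theorem Eutt.eqHead_bind (hk : ∀ a, Eutt (k a) (k' a)) (h : Eutt t u) {x y : ITree E R}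
    (hx : Untaus (bind t k) x) (hy : Untaus (bind u k') y) :
    EqHead (fun x y => BindEutt k k' x y ∨ Eutt x y) x y := by
  rcases untaus_bind_iff.mp hx with ⟨a, hta, hka⟩ | ⟨X, e, g, htg, rfl⟩ <;>
    rcases untaus_bind_iff.mp hy with ⟨b, hub, hkb⟩ | ⟨Y, f, g', hug, rfl⟩
  · obtain rfl : a = b := ret_injective (h.eqHead hta hub).eq_ret_of_left.symm
    exact ((hk a).eqHead hka hkb).mono fun _ _ => .inr
  · exact absurd (h.eqHead hta hug).eq_ret_of_left.symm (ret_ne_vis _ _ _)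
  · exact absurd (h.eqHead htg hub).eq_ret_of_right.symm (ret_ne_vis _ _ _)
  · rcases h.eqHead htg hug with ⟨r, hr, -⟩ | ⟨Z, e', kk, kk', hg, hg', hrel⟩
    · exact absurd hr.symm (ret_ne_vis _ _ _)
    · refine .inr ⟨Z, e', _, _, ?_, ?_, fun z => .inl ⟨kk z, kk' z, hrel z, rfl, rfl⟩⟩
      · rw [← bind_vis, hg, bind_vis]
      · rw [← bind_vis, hg', bind_vis]

end ITree

/-- Bind respects equivalence up to `Tau`: if `t ≡ u` and
`k a ≡ k' a` for every `a`, then `(a <- t ;; k a) ≡ (a <- u ;; k' a)`. -/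
theorem bind_congr_eutt (E : Type → Type) (A R : Type) (t u : ITree E A)
    (k k' : A → ITree E R) (ht : ITree.Eutt t u)
    (hk : ∀ a : A, ITree.Eutt (k a) (k' a)) :
    ITree.Eutt (ITree.bind t k) (ITree.bind u k') := by
  refine ITree.Eutt.coinduct_upTo (ITree.BindEutt k k') ?_ ⟨t, u, ht, rfl, rfl⟩
  rintro _ _ ⟨t₀, u₀, h₀, rfl, rfl⟩
  refine ⟨⟨h₀.finiteTaus_bind hk, h₀.symm.finiteTaus_bind fun a => (hk a).symm⟩, ?_⟩
  exact fun _ _ => h₀.eqHead_bind hk
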